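/- Let n ≥ 2 be an integer and λ₊(n) = (3/(n+2))·(1 − √((n−1)/(3(n+1)))). Then for all λ with 1/(n+1) ≤ λ ≤ λ₊(n): p_0(n,λ) ≤ p_1(n,λ) ≤ … ≤ p_{n−1}(n,λ), p_{n−1}(n,λ) ≥ p_n(n,λ), and p_n(n,λ) ≤ p_{n+1}(n,λ). -/

import Mathlib

/-!
Writing `f(ℓ)` for the quadratic factor of `p_ℓ`, the ratio `p_{ℓ+1} / p_ℓ` equals
`(n+1-ℓ)(1-λ) f(ℓ+1) / ((ℓ+1) λ f(ℓ))`, so every comparison of neighbours is decided by the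
sign of an explicit polynomial in `n, ℓ, λ`. With `w = 3 - (n+2)λ`, the condition `λ ≤ λ₊(n)`
says exactly `w ≥ 0` and `(n+1) w² ≥ 3(n-1)`; for `ℓ ≤ n-2` these two facts, together with
`ℓ ≥ 0` and `n - 2 - ℓ ≥ 0`, make the polynomial nonnegative through an explicit identity.
The two comparisons at the end are simpler: with `u = (n+1)λ - 1`, the lower bound
`λ ≥ 1/(n+1)` gives `u ≥ 0` and `λ ≤ λ₊(n)` gives `u ≤ 1 - λ`, which is all they need.
-/

/-- The output distribution `p(n,λ)` of the general attenuator with Fock environment `|n⟩`,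
for `ℓ = 0, …, n+1` (the case `ℓ = n+1` is the continuous extension of the formula
`… · λ^(n-ℓ) · …`, which involves `λ⁻¹`, valid for all `λ ∈ (0,1)`). -/
noncomputable def pdist (n ℓ : ℕ) (t : ℝ) : ℝ :=
  if ℓ ≤ n then
    1 / (2 * ((n : ℝ) + 1) * (1 - t)) * ((n + 1).choose ℓ : ℝ) * (1 - t) ^ ℓ * t ^ (n - ℓ) *
      ((1 - t) * ((n : ℝ) - (ℓ : ℝ) + 1) + (((n : ℝ) + 1) * (1 - t) - (ℓ : ℝ)) ^ 2)
  else ((n : ℝ) + 1) * t * (1 - t) ^ n / 2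

/-- The output distribution `q(n,λ)` (spectrum of the joint output state). -/
noncomputable def qdist (n ℓ : ℕ) (t : ℝ) : ℝ :=
  if ℓ ≤ n then
    1 / (2 * ((n : ℝ) + 1) * (1 - t)) * ((n + 1).choose ℓ : ℝ) * (1 - t) ^ ℓ * t ^ (n - ℓ) *
      (t * (ℓ : ℝ) + (((n : ℝ) + 1) * (1 - t) - (ℓ : ℝ)) ^ 2)
  else (1 - t) ^ n * (1 + ((n : ℝ) + 1) * t) / 2

/-- The threshold . -/
noncomputable def lamPlus (n : ℕ) : ℝ :=
  3 / ((n : ℝ) + 2) * (1 - Real.sqrt (((n : ℝ) - 1) / (3 * ((n : ℝ) + 1))))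

def pdistFactor (x l t : ℝ) : ℝ := (1 - t) * (x - l + 1) + ((x + 1) * (1 - t) - l) ^ 2

def pdistStep (x l t : ℝ) : ℝ :=
  (x - l + 1) * (1 - t) * pdistFactor x (l + 1) t - (l + 1) * t * pdistFactor x l t

lemma pdist_of_le {n ℓ : ℕ} (t : ℝ) (h : ℓ ≤ n) :
    pdist n ℓ t = 1 / (2 * ((n : ℝ) + 1) * (1 - t)) * ((n + 1).choose ℓ : ℝ) * (1 - t) ^ ℓ *
      t ^ (n - ℓ) * pdistFactor n ℓ t := by
  rw [pdist, if_pos h, pdistFactor]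

lemma succ_mul_pdist_succ_sub_pdist {n ℓ : ℕ} (t : ℝ) (h : ℓ < n) :
    ((ℓ : ℝ) + 1) * (pdist n (ℓ + 1) t - pdist n ℓ t) =
      ((n + 1).choose ℓ : ℝ) * (1 - t) ^ ℓ * t ^ (n - (ℓ + 1)) / (2 * ((n : ℝ) + 1) * (1 - t)) *
        pdistStep n ℓ t := by
  have hchoose : ((n + 1).choose (ℓ + 1) : ℝ) * (ℓ + 1) = (n + 1).choose ℓ * ((n : ℝ) - ℓ + 1) := by
    have := congrArg (Nat.cast : ℕ → ℝ) (Nat.choose_succ_right_eq (n + 1) ℓ)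
    push_cast [Nat.cast_sub (show ℓ ≤ n + 1 by omega)] at this
    linarith
  have hpow : t ^ (n - ℓ) = t ^ (n - (ℓ + 1)) * t := by
    rw [← pow_succ]
    congr 1
    omega
  rw [pdist_of_le t h.le, pdist_of_le t h, hpow, pow_succ (1 - t) ℓ, pdistStep]
  push_cast
  linear_combination 1 / (2 * ((n : ℝ) + 1) * (1 - t)) * (1 - t) ^ ℓ * (1 - t) * t ^ (n - (ℓ + 1)) *
    pdistFactor n (ℓ + 1) t * hchoose

lemma sign_pdist_succ_sub_pdist {n ℓ : ℕ} {t : ℝ} (h : ℓ < n) (ht0 : 0 < t) (ht1 : t < 1) :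
    SignType.sign (pdist n (ℓ + 1) t - pdist n ℓ t) = SignType.sign (pdistStep n ℓ t) := by
  have hs : 0 < 1 - t := sub_pos.mpr ht1
  have hcoeff : 0 < ((n + 1).choose ℓ : ℝ) * (1 - t) ^ ℓ * t ^ (n - (ℓ + 1)) /
      (2 * ((n : ℝ) + 1) * (1 - t)) := by
    have := Nat.choose_pos (show ℓ ≤ n + 1 by omega)
    positivity
  have hsign := congrArg SignType.sign (succ_mul_pdist_succ_sub_pdist t h)
  rwa [sign_mul, sign_mul, sign_pos (by positivity : (0 : ℝ) < ℓ + 1), sign_pos hcoeff, one_mul,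
    one_mul] at hsign

lemma pdist_le_pdist_succ {n ℓ : ℕ} {t : ℝ} (h : ℓ < n) (ht0 : 0 < t) (ht1 : t < 1)
    (hstep : 0 ≤ pdistStep n ℓ t) : pdist n ℓ t ≤ pdist n (ℓ + 1) t := by
  rwa [← sub_nonneg, ← sign_nonneg_iff, sign_pdist_succ_sub_pdist h ht0 ht1, sign_nonneg_iff]

lemma pdist_succ_le_pdist {n ℓ : ℕ} {t : ℝ} (h : ℓ < n) (ht0 : 0 < t) (ht1 : t < 1)
    (hstep : pdistStep n ℓ t ≤ 0) : pdist n (ℓ + 1) t ≤ pdist n ℓ t := by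
  rwa [← sub_nonpos, ← sign_nonpos_iff, sign_pdist_succ_sub_pdist h ht0 ht1, sign_nonpos_iff]

lemma le_lamPlus_iff (n : ℕ) (t : ℝ) :
    t ≤ lamPlus n ↔
      0 ≤ 3 - ((n : ℝ) + 2) * t ∧ 3 * ((n : ℝ) - 1) ≤ (n + 1) * (3 - (n + 2) * t) ^ 2 := by
  have hn2 : (0 : ℝ) < n + 2 := by positivity
  have hn1 : (0 : ℝ) < 3 * (n + 1) := by positivity
  rw [lamPlus, div_mul_eq_mul_div, le_div_iff₀' hn2,
    show ((n : ℝ) + 2) * t ≤ 3 * (1 - √((n - 1) / (3 * (n + 1)))) ↔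
      √((n - 1) / (3 * (n + 1))) ≤ (3 - (n + 2) * t) / 3 by constructor <;> intro <;> linarith,
    Real.sqrt_le_iff, div_le_iff₀ hn1, div_pow]
  constructor <;> rintro ⟨hw, hQ⟩ <;> refine ⟨by linarith, by nlinarith⟩

section Polynomial

variable {x l t : ℝ}

lemma two_mul_add_one_mul_le_three (hx : 2 ≤ x) (hw : 0 ≤ 3 - (x + 2) * t)
    (hQ : 3 * (x - 1) ≤ (x + 1) * (3 - (x + 2) * t) ^ 2) : 2 * (x + 1) * t ≤ 3 := by
  by_contra! h
  have hlt : 2 * (x + 1) * (3 - (x + 2) * t) < 3 * x := by nlinarith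
  nlinarith [mul_self_lt_mul_self (by positivity) hlt]

lemma add_two_mul_le_two (hx : 2 ≤ x) (hw : 0 ≤ 3 - (x + 2) * t)
    (hQ : 3 * (x - 1) ≤ (x + 1) * (3 - (x + 2) * t) ^ 2) : (x + 2) * t ≤ 2 := by
  by_contra! h
  have : (3 - (x + 2) * t) ^ 2 < 1 := by nlinarith
  nlinarith

lemma pdistStep_nonneg (hl : 0 ≤ l) (hlx : l + 2 ≤ x) (hw : 0 ≤ 3 - (x + 2) * t)
    (hQ : 3 * (x - 1) ≤ (x + 1) * (3 - (x + 2) * t) ^ 2) : 0 ≤ pdistStep x l t := by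
  have hv : 0 ≤ 3 - 2 * (x + 1) * t := by
    linarith [two_mul_add_one_mul_le_three (by linarith) hw hQ]
  have hR : 0 ≤ 21 - 17 * (x + 1) * t + (3 * x + 4) * (x + 1) * t ^ 2 := by
    have hcert : 4 * (x + 1) * (21 - 17 * (x + 1) * t + (3 * x + 4) * (x + 1) * t ^ 2) =
        9 * x + 18 + (16 * x + 10) * (3 - 2 * (x + 1) * t) +
          (3 * x + 4) * (3 - 2 * (x + 1) * t) ^ 2 := by ring
    have : 0 ≤ 4 * (x + 1) * (21 - 17 * (x + 1) * t + (3 * x + 4) * (x + 1) * t ^ 2) := by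
      rw [hcert]
      have : 0 ≤ x := by linarith
      positivity
    exact nonneg_of_mul_nonneg_right (by linarith) (by linarith : (0 : ℝ) < 4 * (x + 1))
  have hid : (x + 2) * pdistStep x l t =
      ((x + 1) * (3 - (x + 2) * t) ^ 2 - 3 * (x - 1)) * (3 - (x + 1) * t) +
        (x + 2) * (x - 2 - l) * (21 - 17 * (x + 1) * t + (3 * x + 4) * (x + 1) * t ^ 2 +
          (x - 2 - l) * (x + 6 - l - 3 * (x + 1) * t)) := by
    rw [pdistStep, pdistFactor, pdistFactor]
    ring
  have hQ' : 0 ≤ (x + 1) * (3 - (x + 2) * t) ^ 2 - 3 * (x - 1) := by linarith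
  have hlx' : 0 ≤ x - 2 - l := by linarith
  have : 0 ≤ (x + 2) * pdistStep x l t := by
    rw [hid]
    exact add_nonneg (mul_nonneg hQ' (by linarith)) (mul_nonneg (mul_nonneg (by linarith) hlx')
      (add_nonneg hR (mul_nonneg hlx' (by linarith))))
  exact nonneg_of_mul_nonneg_right this (by linarith)

lemma pdistStep_pred_nonpos (hlow : 1 ≤ (x + 1) * t) (hup : (x + 1) * t ≤ 2) (ht1 : t ≤ 1) :
    pdistStep x (x - 1) t ≤ 0 := by
  have hid : pdistStep x (x - 1) t = -((2 - (x + 1) * t) *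
      (((x + 1) * t - 1) * (2 - (x + 1) * t) + (1 - t) * ((x + 1) * t))) := by
    rw [pdistStep, pdistFactor, pdistFactor]
    ring
  rw [hid, neg_nonpos]
  have h2 : 0 ≤ 2 - (x + 1) * t := by linarith
  exact mul_nonneg h2 (add_nonneg (mul_nonneg (by linarith) h2)
    (mul_nonneg (by linarith) (by linarith)))

lemma pdistFactor_self_le (hlow : 1 ≤ (x + 1) * t) (hup : (x + 2) * t ≤ 2) :
    pdistFactor x x t ≤ (x + 1) * t * (1 - t) := by
  have hid : (x + 1) * t * (1 - t) - pdistFactor x x t = ((x + 1) * t - 1) * (2 - (x + 2) * t) := by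
    rw [pdistFactor]
    ring
  rw [← sub_nonneg, hid]
  exact mul_nonneg (sub_nonneg.mpr hlow) (sub_nonneg.mpr hup)

end Polynomial

lemma pdist_self_le_pdist_succ {n : ℕ} {t : ℝ} (hlow : 1 ≤ ((n : ℝ) + 1) * t)
    (hup : ((n : ℝ) + 2) * t ≤ 2) (ht1 : t < 1) : pdist n n t ≤ pdist n (n + 1) t := by
  have hs : 0 < 1 - t := sub_pos.mpr ht1
  rw [pdist_of_le t le_rfl, pdist, if_neg (by omega), Nat.choose_succ_self_right, Nat.sub_self,
    pow_zero]
  push_cast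
  calc _ = (1 - t) ^ n / (2 * (1 - t)) * pdistFactor n n t := by
        field_simp
    _ ≤ (1 - t) ^ n / (2 * (1 - t)) * ((n + 1) * t * (1 - t)) := by
        gcongr
        exact pdistFactor_self_le hlow hup
    _ = _ := by
        field_simp

theorem pdist_partially_sorted (n : ℕ) (hn : 2 ≤ n) (t : ℝ)
    (h1 : 1 / ((n : ℝ) + 1) ≤ t) (h2 : t ≤ lamPlus n) :
    (∀ ℓ : ℕ, ℓ + 1 ≤ n - 1 → pdist n ℓ t ≤ pdist n (ℓ + 1) t) ∧
    pdist n n t ≤ pdist n (n - 1) t ∧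
    pdist n n t ≤ pdist n (n + 1) t := by
  have hn' : (2 : ℝ) ≤ n := by exact_mod_cast hn
  have hlow : 1 ≤ ((n : ℝ) + 1) * t := by rwa [div_le_iff₀' (by positivity)] at h1
  obtain ⟨hw, hQ⟩ := (le_lamPlus_iff n t).mp h2
  have hup : ((n : ℝ) + 2) * t ≤ 2 := add_two_mul_le_two hn' hw hQ
  have ht0 : 0 < t := by nlinarith
  have ht1 : t < 1 := by nlinarith
  refine ⟨fun ℓ hℓ => ?_, ?_, pdist_self_le_pdist_succ hlow hup ht1⟩
  · refine pdist_le_pdist_succ (by omega) ht0 ht1 (pdistStep_nonneg ℓ.cast_nonneg ?_ hw hQ)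
    exact_mod_cast (by omega : ℓ + 2 ≤ n)
  · have hstep : pdistStep n ((n - 1 : ℕ) : ℝ) t ≤ 0 := by
      rw [Nat.cast_pred (by omega)]
      exact pdistStep_pred_nonpos hlow (by linarith) ht1.le
    have := pdist_succ_le_pdist (by omega) ht0 ht1 hstep
    rwa [Nat.sub_add_cancel (by omega : 1 ≤ n)] at this
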